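/- If X is a positive semidefinite Hermitian p×p matrix with nontrivial kernel (det X = 0), then sup over Hermitian K < I_p of tr(KX) + a log det(I_p − K) is +∞, for any a > 0. -/

import Mathlib

/-!
A vector `v ≠ 0` in the kernel of `X` gives the admissible matrices
`K_t = -t • v vᴴ`, `t ≥ 0`.
Since `X` is Hermitian, `v vᴴ X = v (X v)ᴴ = 0`, so the trace term vanishes, while
`det (1 - K_t) = 1 + t ‖v‖²`, so the objective `a log (1 + t ‖v‖²)` tends to `∞`.
-/

open scoped ComplexOrder
open Filter Matrix

namespace Matrix

variable {n 𝕜 : Type*} [Fintype n]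

lemma vecMulVec_star_mul_eq_zero [Semiring 𝕜] [StarRing 𝕜] {X : Matrix n n 𝕜}
    (hX : X.IsHermitian) {v : n → 𝕜} (hv : X *ᵥ v = 0) (u : n → 𝕜) :
    vecMulVec u (star v) * X = 0 := by
  rw [vecMulVec_mul, ← hX.eq, vecMul_conjTranspose, star_star, hv, star_zero, vecMulVec_zero]

lemma det_one_add_vecMulVec [DecidableEq n] [CommRing 𝕜] (u w : n → 𝕜) :
    (1 + vecMulVec u w).det = 1 + w ⬝ᵥ u := by
  rw [vecMulVec_eq Unit, det_one_add_replicateCol_mul_replicateRow]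

variable [DecidableEq n] [RCLike 𝕜]

lemma isHermitian_and_posDef_one_sub_neg_smul_vecMulVec_star {t : ℝ} (ht : 0 ≤ t)
    (v : n → 𝕜) :
    (-(t • vecMulVec v (star v))).IsHermitian ∧
      ((1 : Matrix n n 𝕜) - -(t • vecMulVec v (star v))).PosDef := by
  have hpsd := (posSemidef_vecMulVec_self_star v).smul ht
  rw [sub_neg_eq_add]
  exact ⟨hpsd.isHermitian.neg, PosDef.one.add_posSemidef hpsd⟩

lemma re_trace_mul_add_mul_log_det_one_sub_neg_smul_vecMulVec_star {X : Matrix n n 𝕜}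
    (hX : X.IsHermitian) {v : n → 𝕜} (hv : X *ᵥ v = 0) (a t : ℝ) :
    RCLike.re (-(t • vecMulVec v (star v)) * X).trace
        + a * Real.log (RCLike.re (1 - -(t • vecMulVec v (star v))).det)
      = a * Real.log (1 + t * RCLike.re (star v ⬝ᵥ v)) := by
  rw [neg_mul, smul_mul_assoc, vecMulVec_star_mul_eq_zero hX hv, sub_neg_eq_add,
    ← smul_vecMulVec, det_one_add_vecMulVec, dotProduct_smul]
  simp [RCLike.smul_re]

end Matrix

lemma EReal.iSup_coe_eq_top_of_not_bddAbove {ι : Sort*} {f : ι → ℝ}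
    (hf : ¬BddAbove (Set.range f)) : ⨆ i, (f i : EReal) = ⊤ := by
  refine iSup_eq_top.mpr fun b hb => ?_
  obtain ⟨x, hbx, -⟩ := EReal.lt_iff_exists_real_btwn.mp hb
  obtain ⟨_, ⟨i, rfl⟩, hxi⟩ := not_bddAbove_iff.mp hf x
  exact ⟨i, hbx.trans (EReal.coe_lt_coe_iff.mpr hxi)⟩

lemma tendsto_const_mul_log_one_add_natCast_mul_atTop {a s : ℝ} (ha : 0 < a) (hs : 0 < s) :
    Tendsto (fun n : ℕ => a * Real.log (1 + n * s)) atTop atTop :=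
  (Real.tendsto_log_atTop.comp <| tendsto_atTop_add_const_left _ 1 <|
    tendsto_natCast_atTop_atTop.atTop_mul_const hs).const_mul_atTop ha

/-- If `X` is positive semidefinite Hermitian with `det X = 0`, then the supremum over
Hermitian `K < I` of `tr(KX) + a log det(I - K)` is `+∞`, for any `a > 0`. -/
theorem sup_trace_add_logdet_eq_top {p : ℕ} (a : ℝ) (ha : 0 < a)
    (X : Matrix (Fin p) (Fin p) ℂ) (hX : X.PosSemidef) (hdet : X.det = 0) :
    (⨆ K : {K : Matrix (Fin p) (Fin p) ℂ //
        K.IsHermitian ∧ ((1 : Matrix (Fin p) (Fin p) ℂ) - K).PosDef},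
      ((((K : Matrix (Fin p) (Fin p) ℂ) * X).trace.re
          + a * Real.log ((1 - (K : Matrix (Fin p) (Fin p) ℂ)).det.re) : ℝ) : EReal)) = ⊤ := by
  obtain ⟨v, hv0, hXv⟩ := exists_mulVec_eq_zero_iff.mpr hdet
  have hv : 0 < (star v ⬝ᵥ v).re := (RCLike.pos_iff.mp (dotProduct_star_self_pos_iff.mpr hv0)).1
  refine EReal.iSup_coe_eq_top_of_not_bddAbove fun hbdd =>
    not_bddAbove_of_tendsto_atTop (tendsto_const_mul_log_one_add_natCast_mul_atTop ha hv)
      (hbdd.mono ?_)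
  rintro _ ⟨m, rfl⟩
  exact ⟨⟨_, isHermitian_and_posDef_one_sub_neg_smul_vecMulVec_star m.cast_nonneg v⟩,
    re_trace_mul_add_mul_log_det_one_sub_neg_smul_vecMulVec_star hX.isHermitian hXv a m⟩
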